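/- Let A be a 2×n real matrix, L = (l₁, l₂) ∈ ℤ², and suppose x ∈ ℝ^n satisfies Ax ∈ ℤ², x ≤ 0, and Ax ≥ L. Then there exists an integer λ ≤ 0 such that x' = λ ⊗ x (i.e., x'_j = λ + x_j) satisfies Ax' ∈ ℤ², x' ≤ 0, Ax' ≥ L, and either (Ax')₁ = l₁ or (Ax')₂ = l₂. -/

import Mathlib

/-! Both entries of `A ⊗ x` are integers at or above `L`, and a diagonal shift by `λ` adds `λ` to
both. Taking `λ = max_i (l_i - (A ⊗ x)_i)`, an integer `≤ 0`, lowers the entries until one of them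
reaches its bound; `x ≤ 0` is preserved since `λ ≤ 0`. -/

/-- Max-plus matrix-vector product: `(A ⊗ x)_i = max_j (a_{ij} + x_j)`. -/
noncomputable def mpMul {m n : ℕ} [NeZero n] (A : Fin m → Fin n → ℝ) (x : Fin n → ℝ)
    (i : Fin m) : ℝ :=
  Finset.univ.sup' Finset.univ_nonempty (fun j => A i j + x j)

lemma mpMul_const_add {m n : ℕ} [NeZero n] (A : Fin m → Fin n → ℝ) (x : Fin n → ℝ) (c : ℝ)
    (i : Fin m) : mpMul A (fun j => c + x j) i = c + mpMul A x i := by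
  simp only [mpMul, Finset.add_sup', add_left_comm]

lemma Int.exists_nonpos_shift_tight {ι : Type*} [Fintype ι] [Nonempty ι] (k l : ι → ℤ)
    (h : ∀ i, l i ≤ k i) :
    ∃ lam : ℤ, lam ≤ 0 ∧ (∀ i, l i ≤ lam + k i) ∧ ∃ i, lam + k i = l i := by
  set lam := Finset.univ.sup' Finset.univ_nonempty (fun i => l i - k i)
  obtain ⟨i₀, -, hi₀⟩ :=
    Finset.exists_mem_eq_sup' Finset.univ_nonempty (fun i => l i - k i)
  refine ⟨lam, Finset.sup'_le _ _ fun i _ => by linarith [h i], fun i => ?_, i₀, by omega⟩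
  have := Finset.le_sup' (fun i => l i - k i) (Finset.mem_univ i)
  omega

theorem diagonal_projection {n : ℕ} [NeZero n]
    (A : Fin 2 → Fin n → ℝ) (L : Fin 2 → ℤ) (x : Fin n → ℝ)
    (hint : ∀ i, ∃ k : ℤ, mpMul A x i = k)
    (hx0 : ∀ j, x j ≤ 0)
    (hL : ∀ i, (L i : ℝ) ≤ mpMul A x i) :
    ∃ lam : ℤ, lam ≤ 0 ∧
      (∀ i, ∃ k : ℤ, mpMul A (fun j => (lam : ℝ) + x j) i = k) ∧
      (∀ j, (lam : ℝ) + x j ≤ 0) ∧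
      (∀ i, (L i : ℝ) ≤ mpMul A (fun j => (lam : ℝ) + x j) i) ∧
      (mpMul A (fun j => (lam : ℝ) + x j) 0 = L 0 ∨
        mpMul A (fun j => (lam : ℝ) + x j) 1 = L 1) := by
  choose k hk using hint
  have hLk : ∀ i, L i ≤ k i := fun i => by exact_mod_cast hk i ▸ hL i
  obtain ⟨lam, hlam, hle, i₀, heq⟩ := Int.exists_nonpos_shift_tight k L hLk
  have hshift : ∀ i, mpMul A (fun j => (lam : ℝ) + x j) i = ((lam + k i : ℤ) : ℝ) := fun i => by
    rw [mpMul_const_add, hk, Int.cast_add]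
  refine ⟨lam, hlam, fun i => ⟨_, hshift i⟩, fun j => ?_, fun i => ?_, ?_⟩
  · linarith [hx0 j, (Int.cast_nonpos.mpr hlam : (lam : ℝ) ≤ 0)]
  · rw [hshift]
    exact_mod_cast hle i
  · simp only [hshift, Int.cast_inj]
    exact (Fin.exists_fin_two (p := fun i => lam + k i = L i)).mp ⟨i₀, heq⟩
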